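/- For positive semidefinite n×n complex matrices A and B and any real r with 0 ≤ r ≤ 1, tr(A^r) + tr(B^r) ≥ tr((A+B)^r). -/

import Mathlib

open Matrix
open scoped ComplexOrder

/-- `f` applied to a matrix via the spectral decomposition (junk value `0` if
the matrix is not Hermitian). -/
noncomputable def matFun {n : ℕ} (f : ℝ → ℝ) (A : Matrix (Fin n) (Fin n) ℂ) :
    Matrix (Fin n) (Fin n) ℂ :=
  if hA : A.IsHermitian then
    (hA.eigenvectorUnitary : Matrix (Fin n) (Fin n) ℂ) *
      Matrix.diagonal (fun i => (f (hA.eigenvalues i) : ℂ)) *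
      (star hA.eigenvectorUnitary : Matrix (Fin n) (Fin n) ℂ)
  else 0

/-- The eigenvalues of a Hermitian matrix, sorted in non-increasing order
(junk value `0` if the matrix is not Hermitian). -/
noncomputable def eigsDesc {n : ℕ} (A : Matrix (Fin n) (Fin n) ℂ) : Fin n → ℝ :=
  if hA : A.IsHermitian then (fun k => hA.eigenvalues (Tuple.sort hA.eigenvalues (Fin.rev k)))
  else 0

/-- The absolute value `|X| = (XᴴX)^{1/2}` of a matrix. -/
noncomputable def matAbs {n : ℕ} (X : Matrix (Fin n) (Fin n) ℂ) : Matrix (Fin n) (Fin n) ℂ :=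
  (Matrix.posSemidef_conjTranspose_mul_self X).1.eigenvectorUnitary *
    Matrix.diagonal ((↑) ∘ (Real.sqrt ∘ (Matrix.posSemidef_conjTranspose_mul_self X).1.eigenvalues) : Fin n → ℂ) *
    (star (Matrix.posSemidef_conjTranspose_mul_self X).1.eigenvectorUnitary : Matrix (Fin n) (Fin n) ℂ)

/-- The singular values of `X`, sorted in non-increasing order. -/
noncomputable def svalsDesc {n : ℕ} (X : Matrix (Fin n) (Fin n) ℂ) : Fin n → ℝ :=
  eigsDesc (matAbs X)

/-- Sum of the first `k` entries of a vector indexed by `Fin n`. -/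
noncomputable def kSum {n : ℕ} (μ : Fin n → ℝ) (k : ℕ) : ℝ :=
  ∑ j ∈ Finset.univ.filter (fun j : Fin n => (j : ℕ) < k), μ j

/-- The operator norm: the largest singular value. -/
noncomputable def opNorm {n : ℕ} (X : Matrix (Fin n) (Fin n) ℂ) : ℝ :=
  ⨆ i, svalsDesc X i

/-! Both traces are sums `∑ f λᵢ` over eigenvalues, for the concave `f = (·) ^ r`, and such sums
depend only on the characteristic polynomial. For `S = [√A; √B]` we have `SᴴS = A + B`, while
`M = SSᴴ = [[A, √A√B], [√B√A, B]]` has the same spectrum plus `n` zeros. Conjugating `M` by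
`diag(1, -1)` flips the sign of the off-diagonal blocks, so `M` and its conjugate average to
`A ⊕ B`. Concavity of `X ↦ Tr f(X)` on positive semidefinite matrices (Peierls: Jensen's
inequality for the doubly stochastic matrix `|Qᵢⱼ|²` of a unitary `Q`) then gives
`n f(0) + Tr f(A + B) ≤ Tr f(A) + Tr f(B)`, and `f(0) = 0 ^ r ≥ 0`. -/

namespace Matrix

open Polynomial

variable {ι κ γ : Type*} [Fintype ι] [DecidableEq ι] [Fintype κ] [DecidableEq κ]
  [Fintype γ] [DecidableEq γ]

/-- For Hermitian `M` this is `Tr f(M)`; reading the eigenvalues off the roots of the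
characteristic polynomial makes it depend on `M` only through `M.charpoly`. -/
noncomputable def spectralTrace (f : ℝ → ℝ) (M : Matrix ι ι ℂ) : ℝ :=
  (M.charpoly.roots.map fun z => f z.re).sum

lemma IsHermitian.spectralTrace_eq {M : Matrix ι ι ℂ} (hM : M.IsHermitian) (f : ℝ → ℝ) :
    spectralTrace f M = ∑ i, f (hM.eigenvalues i) := by
  simp [spectralTrace, hM.roots_charpoly_eq_eigenvalues, Finset.sum_map_val]

lemma spectralTrace_of_charpoly_eq_mul {M : Matrix γ γ ℂ} {P : Matrix ι ι ℂ} {Q : Matrix κ κ ℂ}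
    (h : M.charpoly = P.charpoly * Q.charpoly) (f : ℝ → ℝ) :
    spectralTrace f M = spectralTrace f P + spectralTrace f Q := by
  rw [spectralTrace, h, roots_mul (P.charpoly_monic.mul Q.charpoly_monic).ne_zero]
  simp [spectralTrace]

lemma spectralTrace_mul_comm' (A : Matrix ι κ ℂ) (B : Matrix κ ι ℂ) (f : ℝ → ℝ) :
    Fintype.card κ * f 0 + spectralTrace f (A * B) =
      Fintype.card ι * f 0 + spectralTrace f (B * A) := by
  have h := congrArg roots (charpoly_mul_comm' A B)
  rw [roots_mul ((monic_X_pow _).mul (charpoly_monic _)).ne_zero,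
    roots_mul ((monic_X_pow _).mul (charpoly_monic _)).ne_zero, roots_X_pow, roots_X_pow] at h
  have := congrArg (fun s => (s.map fun z : ℂ => f z.re).sum) h
  simpa [spectralTrace, Multiset.map_nsmul, Multiset.sum_nsmul] using this

lemma spectralTrace_mul_comm (A B : Matrix ι ι ℂ) (f : ℝ → ℝ) :
    spectralTrace f (A * B) = spectralTrace f (B * A) := by
  rw [spectralTrace, charpoly_mul_comm, spectralTrace]

lemma trace_matFun {n : ℕ} (f : ℝ → ℝ) {A : Matrix (Fin n) (Fin n) ℂ} (hA : A.IsHermitian) :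
    (matFun f A).trace.re = spectralTrace f A := by
  rw [matFun, dif_pos hA, trace_mul_cycle, Unitary.coe_star_mul_self, one_mul,
    hA.spectralTrace_eq, trace_diagonal]
  simp

lemma normSq_mem_doublyStochastic {U : Matrix ι ι ℂ} (hU : U ∈ unitaryGroup ι ℂ) :
    of (fun i j => Complex.normSq (U i j)) ∈ doublyStochastic ℝ ι := by
  have hrow (i : ι) : ∑ j, Complex.normSq (U i j) = 1 := by
    have h := congrFun (congrFun (mem_unitaryGroup_iff.mp hU) i) i
    simp only [mul_apply, star_apply, Complex.star_def, Complex.mul_conj, one_apply_eq] at h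
    exact_mod_cast h
  have hcol (j : ι) : ∑ i, Complex.normSq (U i j) = 1 := by
    have h := congrFun (congrFun (mem_unitaryGroup_iff'.mp hU) j) j
    simp only [mul_apply, star_apply, Complex.star_def, mul_comm (starRingEnd ℂ _),
      Complex.mul_conj, one_apply_eq] at h
    exact_mod_cast h
  exact mem_doublyStochastic_iff_sum.mpr ⟨fun _ _ => Complex.normSq_nonneg _, hrow, hcol⟩

lemma re_conj_diagonal_apply_self (Q : Matrix ι ι ℂ) (μ : ι → ℝ) (i : ι) :
    ((Q * diagonal (RCLike.ofReal ∘ μ : ι → ℂ) * star Q) i i).re =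
      ∑ j, Complex.normSq (Q i j) * μ j := by
  rw [mul_apply, Complex.re_sum]
  refine Finset.sum_congr rfl fun j _ => ?_
  rw [mul_diagonal, star_apply, Complex.star_def, Function.comp_apply, mul_right_comm,
    Complex.mul_conj]
  simp

lemma ConcaveOn.sum_eigenvalues_le_sum_diag_conj {f : ℝ → ℝ} (hf : ConcaveOn ℝ (Set.Ici 0) f)
    {M : Matrix ι ι ℂ} (hM : M.PosSemidef) {V : Matrix ι ι ℂ} (hV : V ∈ unitaryGroup ι ℂ) :
    ∑ j, f (hM.1.eigenvalues j) ≤ ∑ i, f ((star V * M * V) i i).re := by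
  set Q := star V * (hM.1.eigenvectorUnitary : Matrix ι ι ℂ)
  have hQ : of (fun i j => Complex.normSq (Q i j)) ∈ doublyStochastic ℝ ι :=
    normSq_mem_doublyStochastic <|
      Submonoid.mul_mem _ (Unitary.star_mem hV) hM.1.eigenvectorUnitary.2
  have hconj : star V * M * V = Q * diagonal (RCLike.ofReal ∘ hM.1.eigenvalues) * star Q := by
    conv_lhs => rw [hM.1.spectral_theorem, Unitary.conjStarAlgAut_apply]
    simp only [Q, star_mul, star_star, mul_assoc]
  calc ∑ j, f (hM.1.eigenvalues j)
      = ∑ i, ∑ j, Complex.normSq (Q i j) * f (hM.1.eigenvalues j) := by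
        have hcol (j : ι) : ∑ i, Complex.normSq (Q i j) = 1 :=
          sum_col_of_mem_doublyStochastic hQ j
        rw [Finset.sum_comm]
        simp only [← Finset.sum_mul, hcol, one_mul]
    _ ≤ ∑ i, f ((star V * M * V) i i).re := by
        refine Finset.sum_le_sum fun i _ => ?_
        rw [hconj, re_conj_diagonal_apply_self]
        exact hf.le_map_sum (fun j _ => Complex.normSq_nonneg _)
          (sum_row_of_mem_doublyStochastic hQ i) (fun j _ => hM.eigenvalues_nonneg j)

lemma ConcaveOn.spectralTrace_add_le_two_mul {f : ℝ → ℝ} (hf : ConcaveOn ℝ (Set.Ici 0) f)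
    {M N K : Matrix ι ι ℂ} (hM : M.PosSemidef) (hN : N.PosSemidef) (hK : K.IsHermitian)
    (h : M + N = K + K) :
    spectralTrace f M + spectralTrace f N ≤ 2 * spectralTrace f K := by
  set V := (hK.eigenvectorUnitary : Matrix ι ι ℂ)
  have hV : V ∈ unitaryGroup ι ℂ := hK.eigenvectorUnitary.2
  have hMV := hM.conjTranspose_mul_mul_same V
  have hNV := hN.conjTranspose_mul_mul_same V
  rw [← star_eq_conjTranspose] at hMV hNV
  have hdiag (i : ι) :
      ((star V * M * V) i i).re + ((star V * N * V) i i).re = 2 * hK.eigenvalues i := by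
    have hsum : star V * M * V + star V * N * V = star V * (K + K) * V := by
      rw [← h]; noncomm_ring
    have hK' : star V * K * V = diagonal (RCLike.ofReal ∘ hK.eigenvalues) := by
      simpa [V] using hK.conjStarAlgAut_star_eigenvectorUnitary
    have := congrArg (fun P : Matrix ι ι ℂ => (P i i).re) hsum
    simpa [mul_add, add_mul, hK', two_mul] using this
  have hmid (i : ι) :
      f ((star V * M * V) i i).re + f ((star V * N * V) i i).re ≤ 2 * f (hK.eigenvalues i) := by
    have := hf.2 (Complex.le_def.mp (hMV.diag_nonneg (i := i))).1
      (Complex.le_def.mp (hNV.diag_nonneg (i := i))).1 (by norm_num : (0 : ℝ) ≤ 1 / 2)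
      (by norm_num : (0 : ℝ) ≤ 1 / 2) (by norm_num)
    simp only [smul_eq_mul] at this
    rw [← mul_add, ← mul_add, hdiag, ← mul_assoc, one_div_mul_cancel two_ne_zero, one_mul] at this
    linarith
  rw [hM.1.spectralTrace_eq, hN.1.spectralTrace_eq, hK.spectralTrace_eq, Finset.mul_sum]
  calc _ ≤ ∑ i, f ((star V * M * V) i i).re + ∑ i, f ((star V * N * V) i i).re :=
        add_le_add (hf.sum_eigenvalues_le_sum_diag_conj hM hV)
          (hf.sum_eigenvalues_le_sum_diag_conj hN hV)
    _ ≤ _ := by rw [← Finset.sum_add_distrib]; exact Finset.sum_le_sum fun i _ => hmid i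

open scoped MatrixOrder in
theorem ConcaveOn.card_mul_add_spectralTrace_add_le {f : ℝ → ℝ}
    (hf : ConcaveOn ℝ (Set.Ici 0) f) {A B : Matrix ι ι ℂ} (hA : A.PosSemidef) (hB : B.PosSemidef) :
    Fintype.card ι * f 0 + spectralTrace f (A + B) ≤ spectralTrace f A + spectralTrace f B := by
  set S : Matrix (ι ⊕ ι) ι ℂ := fromRows (CFC.sqrt A) (CFC.sqrt B)
  have hSH : Sᴴ = fromCols (CFC.sqrt A) (CFC.sqrt B) := by
    rw [conjTranspose_fromRows_eq_fromCols_conjTranspose,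
      (CFC.sqrt_nonneg A).posSemidef.1, (CFC.sqrt_nonneg B).posSemidef.1]
  have hsqA := CFC.sqrt_mul_sqrt_self A hA.nonneg
  have hsqB := CFC.sqrt_mul_sqrt_self B hB.nonneg
  set M := S * Sᴴ
  set U : Matrix (ι ⊕ ι) (ι ⊕ ι) ℂ := fromBlocks 1 0 0 (-1)
  set K : Matrix (ι ⊕ ι) (ι ⊕ ι) ℂ := fromBlocks A 0 0 B
  have hUU : U * U = 1 := by simp [U, fromBlocks_multiply, ← fromBlocks_one]
  have hUH : Uᴴ = U := by simp [U, fromBlocks_conjTranspose]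
  have hM : M.PosSemidef := posSemidef_self_mul_conjTranspose S
  have hUMU : (U * M * U).PosSemidef := by
    simpa [hUH] using hM.mul_mul_conjTranspose_same U
  have hK : K.IsHermitian := by
    simp [K, IsHermitian, fromBlocks_conjTranspose, hA.1.eq, hB.1.eq]
  have hpinch : M + U * M * U = K + K := by
    simp [M, U, K, hSH, S, fromBlocks_multiply, fromBlocks_add, hsqA, hsqB]
  have hM_eq : spectralTrace f M = Fintype.card ι * f 0 + spectralTrace f (A + B) := by
    have := spectralTrace_mul_comm' S Sᴴ f
    rw [hSH, fromCols_mul_fromRows, hsqA, hsqB, ← hSH, Fintype.card_sum] at this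
    push_cast at this
    linarith
  have hUMU_eq : spectralTrace f (U * M * U) = spectralTrace f M := by
    rw [spectralTrace_mul_comm, ← mul_assoc, hUU, one_mul]
  have hK_eq : spectralTrace f K = spectralTrace f A + spectralTrace f B :=
    spectralTrace_of_charpoly_eq_mul (charpoly_fromBlocks_zero₁₂ _ _ _) f
  have := hf.spectralTrace_add_le_two_mul hM hUMU hK hpinch
  linarith

end Matrix

/-- McCarthy: for PSD matrices and `0 ≤ r ≤ 1`, `tr(A^r) + tr(B^r) ≥ tr((A+B)^r)`. -/
theorem trace_rpow_add_ge {n : ℕ} (A B : Matrix (Fin n) (Fin n) ℂ)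
    (hA : A.PosSemidef) (hB : B.PosSemidef) (r : ℝ) (hr0 : 0 ≤ r) (hr1 : r ≤ 1) :
    ((matFun (fun x => x ^ r) (A + B)).trace).re ≤
      ((matFun (fun x => x ^ r) A).trace).re + ((matFun (fun x => x ^ r) B).trace).re := by
  rw [trace_matFun _ (hA.add hB).1, trace_matFun _ hA.1, trace_matFun _ hB.1]
  have h := (Real.concaveOn_rpow hr0 hr1).card_mul_add_spectralTrace_add_le hA hB
  have h0 : (0 : ℝ) ≤ Fintype.card (Fin n) * (0 : ℝ) ^ r := by positivity
  linarith
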